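/- arXiv:1903.01299 — 2 statements merged into one kernel-verified Lean document; each statement's English description precedes it below -/
import Mathlib

section
/- Suppose v : ℝ → ℝ is continuous, compactly supported, and supported in I₀ = [-1/2, 1/2]. If v is orthogonal to all polynomials of degree less than n on I₀ (i.e., ∫ x^j v(x) dx = 0 for 0 ≤ j < n), then for every m ≤ n there is an m-th order antiderivative D^{-m}v of v that is supported in I₀. -/
open MeasureTheory Set

private lemma key : ∀ (m : ℕ) (v : ℝ → ℝ), Continuous v →
    (∀ x : ℝ, x ∉ Set.Icc (-(1:ℝ)/2) (1/2) → v x = 0) →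
    (∀ j : ℕ, j < m → ∫ x : ℝ, x^j * v x = 0) →
    ∃ w : ℝ → ℝ, iteratedDeriv m w = v ∧
      ∀ x : ℝ, x ∉ Set.Icc (-(1:ℝ)/2) (1/2) → w x = 0 := by
  intro m
  induction m with
  | zero => intro v hv hsupp _; exact ⟨v, iteratedDeriv_zero, hsupp⟩
  | succ m ih =>
    intro v hv hsupp horth
    set w₁ : ℝ → ℝ := fun x => ∫ t in (-1:ℝ)..x, v t with hw₁def
    have hcs : HasCompactSupport v := HasCompactSupport.intro isCompact_Icc hsupp
    have hsubset : Function.support v ⊆ Set.Icc (-(1:ℝ)/2) (1/2) := by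
      intro x hx
      by_contra hxn
      exact hx (hsupp x hxn)
    have hderiv : ∀ x : ℝ, HasDerivAt w₁ (v x) x := fun x =>
      (hv.integral_hasStrictDerivAt (-1) x).hasDerivAt
    have hw₁cont : Continuous w₁ :=
      continuous_iff_continuousAt.2 fun x => (hderiv x).continuousAt
    -- total integral of v is zero
    have hintv : ∫ x : ℝ, v x = 0 := by
      have := horth 0 (Nat.succ_pos m)
      simpa using this
    have hw₁supp : ∀ x : ℝ, x ∉ Set.Icc (-(1:ℝ)/2) (1/2) → w₁ x = 0 := by
      intro x hx
      simp only [Set.mem_Icc, not_and_or, not_le] at hx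
      rcases hx with hlt | hgt
      · -- x < -1/2 : integrand vanishes on [[-1, x]]
        have : EqOn v 0 (Set.uIcc (-1:ℝ) x) := by
          intro t ht
          apply hsupp
          have ht2 : t ≤ max (-1:ℝ) x := (Set.mem_uIcc.mp ht).elim (fun h => le_trans h.2 (le_max_right _ _)) (fun h => le_trans h.2 (le_max_left _ _))
          have hmax : max (-1:ℝ) x < -1/2 := max_lt (by norm_num) hlt
          simp only [Set.mem_Icc, not_and_or, not_le]
          left; linarith
        simp only [hw₁def]
        rw [intervalIntegral.integral_congr this]
        simp
      · -- x > 1/2 : integral over [-1, x] equals total integral = 0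
        have hsub : Function.support v ⊆ Set.Ioc (-1:ℝ) x := by
          refine hsubset.trans ?_
          intro t ht
          rcases ht with ⟨h1, h2⟩
          exact ⟨by linarith, by linarith⟩
        simp only [hw₁def]
        rw [intervalIntegral.integral_eq_integral_of_support_subset hsub]
        exact hintv
    -- orthogonality of w₁ to polynomials of degree < m
    have horth₁ : ∀ j : ℕ, j < m → ∫ x : ℝ, x^j * w₁ x = 0 := by
      intro j hj
      have hsubw : Function.support (fun x : ℝ => x^j * w₁ x) ⊆ Set.Ioc (-1:ℝ) 1 := by
        intro x hx
        simp only [Function.mem_support] at hx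
        by_contra hxn
        apply hx
        have : w₁ x = 0 := by
          apply hw₁supp
          simp only [Set.mem_Ioc, not_and_or, not_lt, not_le] at hxn
          simp only [Set.mem_Icc, not_and_or, not_le]
          rcases hxn with h | h
          · left; linarith
          · right; linarith
        rw [this, mul_zero]
      rw [← intervalIntegral.integral_eq_integral_of_support_subset hsubw]
      -- integration by parts with u x = x^(j+1)
      have hu : ∀ x ∈ Set.uIcc (-1:ℝ) 1, HasDerivAt (fun x : ℝ => x^(j+1))
          (((j:ℝ)+1) * x^j) x := by
        intro x _
        have := hasDerivAt_pow (j+1) x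
        simpa [Nat.cast_add] using this
      have hvv : ∀ x ∈ Set.uIcc (-1:ℝ) 1, HasDerivAt w₁ (v x) x := fun x _ => hderiv x
      have hu' : IntervalIntegrable (fun x : ℝ => ((j:ℝ)+1) * x^j) volume (-1) 1 :=
        ((continuous_const.mul (continuous_pow j)) : Continuous fun x : ℝ => ((j:ℝ)+1) * x^j).intervalIntegrable _ _
      have hv' : IntervalIntegrable v volume (-1) 1 := hv.intervalIntegrable _ _
      have hparts := intervalIntegral.integral_deriv_mul_eq_sub hu hvv hu' hv'
      have hb1 : w₁ (1:ℝ) = 0 := hw₁supp 1 (by norm_num)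
      have hb2 : w₁ (-1:ℝ) = 0 := hw₁supp (-1) (by norm_num)
      rw [hb1, hb2] at hparts
      simp only [mul_zero, sub_zero] at hparts
      -- second term : ∫ x^(j+1) * v x over [-1,1] = total integral = 0
      have hsubv : Function.support (fun x : ℝ => x^(j+1) * v x) ⊆ Set.Ioc (-1:ℝ) 1 := by
        intro x hx
        simp only [Function.mem_support] at hx
        by_contra hxn
        apply hx
        have : v x = 0 := by
          apply hsupp
          simp only [Set.mem_Ioc, not_and_or, not_lt, not_le] at hxn
          simp only [Set.mem_Icc, not_and_or, not_le]
          rcases hxn with h | h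
          · left; linarith
          · right; linarith
        rw [this, mul_zero]
      have h2 : ∫ x in (-1:ℝ)..1, x^(j+1) * v x = 0 := by
        rw [intervalIntegral.integral_eq_integral_of_support_subset hsubv]
        exact horth (j+1) (by omega)
      rw [intervalIntegral.integral_add ((hu'.mul_continuousOn hw₁cont.continuousOn))
        (hv'.continuousOn_mul (by fun_prop))] at hparts
      rw [h2, add_zero] at hparts
      have hfact : ∫ x in (-1:ℝ)..1, ((j:ℝ)+1) * x^j * w₁ x
          = ((j:ℝ)+1) * ∫ x in (-1:ℝ)..1, x^j * w₁ x := by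
        rw [← intervalIntegral.integral_const_mul]
        congr 1
        ext x
        ring
      rw [hfact] at hparts
      have hne : ((j:ℝ)+1) ≠ 0 := by positivity
      rcases mul_eq_zero.mp hparts with h | h
      · exact absurd h hne
      · exact h
    obtain ⟨w, hw, hwsupp⟩ := ih w₁ hw₁cont hw₁supp horth₁
    refine ⟨w, ?_, hwsupp⟩
    rw [iteratedDeriv_succ, hw]
    funext x
    exact (hderiv x).deriv

/-- If `v` is continuous, supported in `I₀ = [-1/2, 1/2]`, and orthogonal to all
polynomials of degree `< n`, then for every `m ≤ n` there is an `m`-th order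
antiderivative of `v` supported in `I₀`. -/
theorem stmt4 (v : ℝ → ℝ) (n : ℕ) (hv : Continuous v)
    (hsupp : ∀ x : ℝ, x ∉ Set.Icc (-(1:ℝ)/2) (1/2) → v x = 0)
    (horth : ∀ j : ℕ, j < n → ∫ x : ℝ, x^j * v x = 0) :
    ∀ m : ℕ, m ≤ n → ∃ w : ℝ → ℝ,
      iteratedDeriv m w = v ∧ ∀ x : ℝ, x ∉ Set.Icc (-(1:ℝ)/2) (1/2) → w x = 0 := by
  intro m hm
  exact key m v hv hsupp (fun j hj => horth j (lt_of_lt_of_le hj hm))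
end

section
/- For n ≥ 2, the second antiderivative of 𝒫_n given by D^{-2}𝒫_n = C_n⁺ 𝒫_{n+2} + C_n⁻ 𝒫_{n-2} - (C_n⁺ + C_n⁻) 𝒫_n, where C_n⁺ = 1/(4(2n+1)(2n+3)) and C_n⁻ = 1/(4(2n+1)(2n-1)), satisfies: its second derivative equals 𝒫_n, and it vanishes together with its first derivative at x = ±1/2. -/
/-- The Legendre polynomial `P_n` via the Rodrigues formula. -/
noncomputable def legendreP (n : ℕ) (x : ℝ) : ℝ :=
  (1 / (2^n * n.factorial)) * iteratedDeriv n (fun t : ℝ => (t^2 - 1)^n) x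

/-- The scaled Legendre polynomial `𝒫_n(x) = P_n(2x)`. -/
noncomputable def scaledP (n : ℕ) (x : ℝ) : ℝ := legendreP n (2*x)

/-!
Differentiating `(x² - 1)^(m+2)` twice gives
`(2m+3)(2m+4) (x² - 1)^(m+1) + 4(m+1)(m+2) (x² - 1)^m`; applying `D^(m+1)` and normalising
yields `P'_{m+2} - P'_m = (2m+3) P_{m+1}`, i.e. `𝒫'_{m+2} - 𝒫'_m = (4m+6) 𝒫_{m+1}`.
Used twice, this shows that the first derivative of the given combination is
`(𝒫_{n+1} - 𝒫_{n-1}) / (4n+2)` and the second is `𝒫_n`. The boundary conditions follow from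
`𝒫_m(±1/2) = (±1)^m`: both functions are combinations of `𝒫`'s of a single parity whose
coefficients sum to zero.
-/

open Polynomial
open scoped Nat

section Rodrigues

variable {R : Type*} [CommRing R]

noncomputable def rodriguesPoly (n : ℕ) : R[X] := derivative^[n] ((X ^ 2 - 1) ^ n)

theorem eval_iterate_derivative_X_sub_pow_mul_X_sub_pow (n : ℕ) (a b : R) :
    (derivative^[n] ((X - C a) ^ n * (X - C b) ^ n)).eval a = n ! * (a - b) ^ n := by
  rw [iterate_derivative_mul, eval_finsetSum, Finset.sum_eq_single 0]
  · simp [iterate_derivative_X_sub_pow_self]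
  · intro k hkn hk
    have hk' : n - (n - k) = k := Nat.sub_sub_self (by simpa [Nat.lt_succ_iff] using hkn)
    simp [iterate_derivative_X_sub_pow, hk', zero_pow hk]
  · simp

theorem X_sq_sub_one_pow (n : ℕ) :
    ((X : R[X]) ^ 2 - 1) ^ n = (X - C 1) ^ n * (X - C (-1)) ^ n := by
  rw [← mul_pow]; simp only [map_one, map_neg]; ring

theorem rodriguesPoly_eval_one (n : ℕ) : (rodriguesPoly n : R[X]).eval 1 = n ! * 2 ^ n := by
  rw [rodriguesPoly, X_sq_sub_one_pow, eval_iterate_derivative_X_sub_pow_mul_X_sub_pow]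
  norm_num

theorem rodriguesPoly_eval_neg_one (n : ℕ) :
    (rodriguesPoly n : R[X]).eval (-1) = n ! * (-2) ^ n := by
  rw [rodriguesPoly, X_sq_sub_one_pow, mul_comm, eval_iterate_derivative_X_sub_pow_mul_X_sub_pow]
  norm_num

theorem derivative_derivative_X_sq_sub_one_pow (m : ℕ) :
    derivative (derivative (((X : R[X]) ^ 2 - 1) ^ (m + 2))) =
      (((2 * m + 3) * (2 * m + 4) : ℕ) : R[X]) * (X ^ 2 - 1) ^ (m + 1)
        + ((4 * (m + 1) * (m + 2) : ℕ) : R[X]) * (X ^ 2 - 1) ^ m := by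
  simp only [derivative_pow, derivative_mul, derivative_sub, derivative_one, derivative_X,
    derivative_natCast, derivative_zero, map_natCast]
  push_cast
  rw [pow_succ _ m]
  ring

theorem derivative_rodriguesPoly_add_two (m : ℕ) :
    derivative (rodriguesPoly (m + 2) : R[X]) =
      (((2 * m + 3) * (2 * m + 4) : ℕ) : R[X]) * rodriguesPoly (m + 1)
        + ((4 * (m + 1) * (m + 2) : ℕ) : R[X]) * derivative (rodriguesPoly m) := by
  simp only [rodriguesPoly, ← Function.iterate_succ_apply' derivative]
  rw [Function.iterate_succ_apply, Function.iterate_succ_apply,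
    derivative_derivative_X_sq_sub_one_pow, iterate_map_add,
    iterate_derivative_natCast_mul, iterate_derivative_natCast_mul]

end Rodrigues

section Legendre

variable {K : Type*} [Field K] [CharZero K]

noncomputable def legendrePoly (n : ℕ) : K[X] := C (2 ^ n * n ! : K)⁻¹ * rodriguesPoly n

theorem legendrePoly_eval_one (n : ℕ) : (legendrePoly n : K[X]).eval 1 = 1 := by
  rw [legendrePoly, eval_mul, eval_C, rodriguesPoly_eval_one]
  have : (n ! : K) ≠ 0 := Nat.cast_ne_zero.mpr n.factorial_ne_zero
  field_simp

theorem legendrePoly_eval_neg_one (n : ℕ) : (legendrePoly n : K[X]).eval (-1) = (-1) ^ n := by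
  rw [legendrePoly, eval_mul, eval_C, rodriguesPoly_eval_neg_one,
    show (-2 : K) ^ n = (-1) ^ n * 2 ^ n by rw [← mul_pow]; norm_num]
  have : (n ! : K) ≠ 0 := Nat.cast_ne_zero.mpr n.factorial_ne_zero
  field_simp

theorem derivative_legendrePoly_add_two_sub (m : ℕ) :
    derivative (legendrePoly (m + 2) : K[X]) - derivative (legendrePoly m) =
      C (2 * m + 3 : K) * legendrePoly (m + 1) := by
  simp only [legendrePoly, derivative_C_mul, derivative_rodriguesPoly_add_two]
  have hm : (m ! : K) ≠ 0 := Nat.cast_ne_zero.mpr m.factorial_ne_zero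
  have hm₂ : (m + 1 + 1 : K) ≠ 0 := by norm_cast
  have h₁ : C (2 ^ (m + 2) * (m + 2)! : K)⁻¹ * (((2 * m + 3) * (2 * m + 4) : ℕ) : K[X])
      = C (2 * m + 3 : K) * C (2 ^ (m + 1) * (m + 1)! : K)⁻¹ := by
    rw [← C_eq_natCast, ← C_mul, ← C_mul]
    congr 1
    push_cast [Nat.factorial_succ]
    field_simp
    ring
  have h₂ : C (2 ^ (m + 2) * (m + 2)! : K)⁻¹ * ((4 * (m + 1) * (m + 2) : ℕ) : K[X])
      = C (2 ^ m * m ! : K)⁻¹ := by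
    rw [← C_eq_natCast, ← C_mul]
    congr 1
    push_cast [Nat.factorial_succ]
    field_simp
    ring
  linear_combination h₁ * rodriguesPoly (m + 1) + h₂ * derivative (rodriguesPoly m)

end Legendre

theorem iteratedDeriv_eval_eq {𝕜 : Type*} [NontriviallyNormedField 𝕜] (k : ℕ) (p : 𝕜[X]) :
    iteratedDeriv k (fun t => p.eval t) = fun t => (derivative^[k] p).eval t := by
  induction k generalizing p with
  | zero => rfl
  | succ k ih =>
    have hderiv : deriv (fun t => p.eval t) = fun t => (derivative p).eval t :=
      funext fun t => p.deriv
    rw [iteratedDeriv_succ', hderiv, ih, Function.iterate_succ_apply]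

theorem legendreP_eq_eval (n : ℕ) (x : ℝ) : legendreP n x = (legendrePoly n).eval x := by
  have hpoly : (fun t : ℝ => (t ^ 2 - 1) ^ n) = fun t => (((X : ℝ[X]) ^ 2 - 1) ^ n).eval t := by
    simp
  rw [legendreP, hpoly, iteratedDeriv_eval_eq, legendrePoly, eval_mul, eval_C, one_div]
  rfl

theorem scaledP_eq_eval (n : ℕ) (x : ℝ) : scaledP n x = (legendrePoly n).eval (2 * x) :=
  legendreP_eq_eval n (2 * x)

theorem hasDerivAt_scaledP (n : ℕ) (x : ℝ) :
    HasDerivAt (scaledP n) (2 * (derivative (legendrePoly n)).eval (2 * x)) x := by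
  have h := ((legendrePoly n).hasDerivAt (2 * x)).comp x ((hasDerivAt_id x).const_mul 2)
  rw [mul_one, mul_comm] at h
  exact h.congr_of_eventuallyEq (.of_forall fun y => scaledP_eq_eval n y)

theorem hasDerivAt_scaledP_add_two_sub (m : ℕ) (x : ℝ) :
    HasDerivAt (fun y => scaledP (m + 2) y - scaledP m y) ((4 * m + 6) * scaledP (m + 1) x) x := by
  refine ((hasDerivAt_scaledP (m + 2) x).sub (hasDerivAt_scaledP m x)).congr_deriv ?_
  rw [← mul_sub, ← eval_sub, derivative_legendrePoly_add_two_sub, eval_mul, eval_C,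
    scaledP_eq_eval]
  ring

theorem scaledP_half (n : ℕ) : scaledP n (1 / 2) = 1 := by
  rw [scaledP_eq_eval, mul_one_div_cancel two_ne_zero, legendrePoly_eval_one]

theorem scaledP_neg_half (n : ℕ) : scaledP n (-(1 : ℝ) / 2) = (-1) ^ n := by
  rw [scaledP_eq_eval, mul_div_cancel₀ _ two_ne_zero, legendrePoly_eval_neg_one]

/-- For `n ≥ 2`, the combination
`D^{-2}𝒫_n = C_n⁺ 𝒫_{n+2} + C_n⁻ 𝒫_{n-2} - (C_n⁺ + C_n⁻) 𝒫_n`, with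
`C_n⁺ = 1/(4(2n+1)(2n+3))` and `C_n⁻ = 1/(4(2n+1)(2n-1))`, is a second
antiderivative of `𝒫_n` which vanishes together with its first derivative
at `x = ±1/2`. -/
theorem stmt7 (n : ℕ) (hn : 2 ≤ n) :
    let Cp : ℝ := 1 / (4 * (2*(n:ℝ) + 1) * (2*(n:ℝ) + 3))
    let Cm : ℝ := 1 / (4 * (2*(n:ℝ) + 1) * (2*(n:ℝ) - 1))
    let Q : ℝ → ℝ := fun x => Cp * scaledP (n+2) x + Cm * scaledP (n-2) x - (Cp + Cm) * scaledP n x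
    (∀ x : ℝ, deriv (deriv Q) x = scaledP n x)
    ∧ Q (1/2) = 0 ∧ Q (-(1:ℝ)/2) = 0
    ∧ deriv Q (1/2) = 0 ∧ deriv Q (-(1:ℝ)/2) = 0 := by
  obtain ⟨k, rfl⟩ : ∃ k, n = k + 2 := ⟨n - 2, by omega⟩
  intro Cp Cm Q
  set A : ℝ → ℝ := fun x => (scaledP (k + 3) x - scaledP (k + 1) x) / (4 * (k + 1 : ℕ) + 6)
  have hk : (2 * ((k : ℝ) + 2) - 1) ≠ 0 := by linarith [(k.cast_nonneg : (0 : ℝ) ≤ k)]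
  have hCp : Cp * (4 * (k + 2 : ℕ) + 6) = 1 / (4 * (k + 1 : ℕ) + 6) := by
    simp only [Cp]; push_cast; field_simp; ring
  have hCm : Cm * (4 * k + 6) = 1 / (4 * (k + 1 : ℕ) + 6) := by
    simp only [Cm]; push_cast; field_simp; ring
  have hQ : deriv Q = A := funext fun x => by
    have h := ((hasDerivAt_scaledP_add_two_sub (k + 2) x).const_mul Cp).sub
      ((hasDerivAt_scaledP_add_two_sub k x).const_mul Cm)
    convert h.deriv using 1
    · congr 1
      funext y
      simp only [Q, Nat.add_sub_cancel, Pi.sub_apply]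
      ring
    · simp only [A, ← mul_assoc, hCp, hCm]
      ring
  have hA : deriv A = scaledP (k + 2) :=
    funext fun x => ((hasDerivAt_scaledP_add_two_sub (k + 1) x).div_const _).deriv.trans
      (mul_div_cancel_left₀ _ (by positivity))
  refine ⟨fun x => by rw [hQ, hA], ?_, ?_, ?_, ?_⟩
  · simp only [Q, scaledP_half]; ring
  · simp only [Q, Nat.add_sub_cancel, scaledP_neg_half, pow_succ]; ring
  · simp only [hQ, A, scaledP_half]; ring
  · simp only [hQ, A, scaledP_neg_half, pow_succ]; ring
end
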